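/- arXiv:alg-geom/9510009 — 4 statements merged into one kernel-verified Lean document; each statement's English description precedes it below -/
import Mathlib

section
/- Let n ≥ 1 and let Z ⊆ (ℂˣ)ⁿ be the set of common zeros, lying in (ℂˣ)ⁿ, of a family of polynomials in n variables all of whose coefficients are algebraic numbers. If p ∈ Z is a point of infinite order in the group (ℂˣ)ⁿ (i.e. p^k ≠ (1,…,1) for every integer k ≥ 1), then p lies in the closure, with respect to the Euclidean topology on (ℂˣ)ⁿ, of the set of points q ∈ Z such that every coordinate of q is an algebraic number and q has infinite order in (ℂˣ)ⁿ. -/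
/-!
Induct on the number of coordinates, approximating any `p ∈ ℂⁿ` by algebraic points `q` at which
every polynomial over `ℚ̄` vanishing at `p` still vanishes. Write `p = (z, x)`. If `z` satisfies no
polynomial relation over `ℚ̄[x]`, every relation of `p` is a relation of `x` alone, so `z` may be
replaced by any algebraic number close to it, in particular one of modulus `≠ 1`. Otherwise fix a
relation `M(x, z) = 0` of least degree in `z`: pseudo-division by `M` turns every other relation
into one of `x` alone, and for algebraic `y` near `x` the polynomial `M(y, ·)` has a root `w` near
`z`, which is algebraic. A coordinate of modulus `≠ 1` rules out finite order, and a polynomial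
with algebraic coefficients is a polynomial over `ℚ̄`.
-/

open scoped Polynomial

notation "ℚ̄" => algebraicClosure ℚ ℂ

namespace Polynomial

variable {A S : Type*} [CommRing A] [CommRing S]

theorem map_eq_zero_of_forall {f g : A →+* S} (h : ∀ a, f a = 0 → g a = 0) {P : A[X]}
    (hP : P.map f = 0) : P.map g = 0 := by
  ext n
  simpa using h _ (by simpa using congrArg (coeff · n) hP)

theorem exists_map_eq_and_leadingCoeff_ne_zero (f : A →+* S) {P : A[X]} (hP : P.map f ≠ 0) :
    ∃ N : A[X], N.map f = P.map f ∧ N.natDegree ≤ P.natDegree ∧ f N.leadingCoeff ≠ 0 := by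
  obtain ⟨N, hN, hdeg⟩ := exists_natDegree_eq_of_mem_lifts (f := f) (p := P.map f) ⟨P, rfl⟩
  refine ⟨N, hN, hdeg ▸ natDegree_map_le, ?_⟩
  rwa [leadingCoeff, ← coeff_map, hN, hdeg, ← leadingCoeff, leadingCoeff_ne_zero]

theorem map_eq_zero_of_eval₂_eq_zero (f : A →+* S) (z : S)
    (h : ∀ N : A[X], f N.leadingCoeff ≠ 0 → N.eval₂ f z ≠ 0) {G : A[X]}
    (hG : G.eval₂ f z = 0) : G.map f = 0 := by
  by_contra hG0
  obtain ⟨N, hN, -, hlc⟩ := exists_map_eq_and_leadingCoeff_ne_zero f hG0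
  exact h N hlc (by rw [← eval_map, hN, eval_map, hG])

theorem exists_C_leadingCoeff_pow_mul_eq_mul_add [IsDomain A] {M : A[X]} (hM : M ≠ 0)
    (G : A[X]) :
    ∃ (k : ℕ) (Q R : A[X]), C M.leadingCoeff ^ k * G = Q * M + R ∧ R.degree < M.degree := by
  induction hd : G.degree using WellFoundedLT.induction generalizing G with
  | ind d ih =>
  subst hd
  by_cases hG : G.degree < M.degree
  · exact ⟨0, 0, G, by simp, hG⟩
  push Not at hG
  have hG0 : G ≠ 0 := by rintro rfl; simp [degree_eq_bot.not.2 hM] at hG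
  set G' := C M.leadingCoeff * G - C G.leadingCoeff * X ^ (G.natDegree - M.natDegree) * M
  have hlt : G'.degree < G.degree := by
    have := degree_sub_lt_left (p := C M.leadingCoeff * G)
      (q := C G.leadingCoeff * X ^ (G.natDegree - M.natDegree) * M) ?_ ?_ ?_
    · simpa [degree_C_mul (leadingCoeff_ne_zero.2 hM)] using this
    · rw [degree_C_mul (leadingCoeff_ne_zero.2 hM), degree_mul,
        degree_C_mul_X_pow _ (leadingCoeff_ne_zero.2 hG0), degree_eq_natDegree hM,
        degree_eq_natDegree hG0]
      norm_cast
      have := natDegree_le_natDegree hG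
      omega
    · exact mul_ne_zero (by simpa using hM) hG0
    · simp only [leadingCoeff_mul, leadingCoeff_C, leadingCoeff_X_pow]
      ring
  obtain ⟨k, Q, R, hQR, hR⟩ := ih _ hlt G' rfl
  refine ⟨k + 1, Q + C (M.leadingCoeff ^ k * G.leadingCoeff) * X ^ (G.natDegree - M.natDegree),
    R, ?_, hR⟩
  simp only [G', map_mul, map_pow] at hQR ⊢
  linear_combination hQR

/-- `M` is an annihilator of `z` of least degree, which is why the pseudo-remainders of the other
annihilators vanish under `f`. -/
theorem exists_minimal_annihilator [IsDomain A] (f : A →+* S) (z : S)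
    (h : ∃ N : A[X], f N.leadingCoeff ≠ 0 ∧ N.eval₂ f z = 0) :
    ∃ M : A[X], f M.leadingCoeff ≠ 0 ∧ M.eval₂ f z = 0 ∧ ∀ G : A[X], G.eval₂ f z = 0 →
      ∃ (k : ℕ) (Q R : A[X]), C M.leadingCoeff ^ k * G = Q * M + R ∧ R.map f = 0 := by
  classical
  have hex : ∃ d, ∃ N : A[X], N.natDegree = d ∧ f N.leadingCoeff ≠ 0 ∧ N.eval₂ f z = 0 :=
    let ⟨N, hN⟩ := h; ⟨_, N, rfl, hN⟩
  obtain ⟨M, hdeg, hlc, hMz⟩ := Nat.find_spec hex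
  refine ⟨M, hlc, hMz, fun G hG => ?_⟩
  have hM0 : M ≠ 0 := by rintro rfl; simp at hlc
  obtain ⟨k, Q, R, hQR, hR⟩ := exists_C_leadingCoeff_pow_mul_eq_mul_add hM0 G
  refine ⟨k, Q, R, hQR, ?_⟩
  have hRz : R.eval₂ f z = 0 := by
    simpa [hG, hMz] using (congrArg (eval₂ f z) hQR).symm
  by_contra hR0
  obtain ⟨N, hN, hNR, hNlc⟩ := exists_map_eq_and_leadingCoeff_ne_zero f hR0
  have hmin := Nat.find_min' hex ⟨N, rfl, hNlc, by rw [← eval_map, hN, eval_map, hRz]⟩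
  have := natDegree_lt_natDegree (fun h => hR0 (by simp [h])) hR
  omega

theorem exists_isRoot_norm_sub_pow_le {𝕜 : Type*} [NormedField 𝕜] [IsAlgClosed 𝕜]
    {f : 𝕜[X]} (hf : 0 < f.natDegree) (z : 𝕜) :
    ∃ w, f.IsRoot w ∧ ‖f.leadingCoeff‖ * ‖z - w‖ ^ f.natDegree ≤ ‖f.eval z‖ := by
  classical
  have hcard : f.roots.card = f.natDegree := IsAlgClosed.card_roots_eq_natDegree
  obtain ⟨w, hw, hmin⟩ := f.roots.toFinset.exists_min_image (‖z - ·‖)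
    (Multiset.toFinset_nonempty.2 (Multiset.card_pos.1 (hcard ▸ hf)))
  refine ⟨w, isRoot_of_mem_roots (Multiset.mem_toFinset.1 hw), ?_⟩
  have hnorm : ‖(f.roots.map (z - ·)).prod‖ = (f.roots.map (‖z - ·‖)).prod := by
    simpa [Multiset.map_map] using map_multiset_prod (normHom : 𝕜 →*₀ ℝ) (f.roots.map (z - ·))
  rw [(IsAlgClosed.splits f).eval_eq_prod_roots, norm_mul, hnorm, ← hcard,
    ← Multiset.prod_replicate, ← Multiset.map_const']
  gcongr
  exact Multiset.prod_map_le_prod_map₀ _ _ (fun _ _ => norm_nonneg _)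
    fun a ha => hmin a (Multiset.mem_toFinset.2 ha)

end Polynomial

namespace MvPolynomial

variable {R S : Type*} [CommSemiring R] [CommSemiring S] [Algebra R S]

theorem aeval_cons_eq_eval₂_finSuccEquiv {n : ℕ} (x : Fin n → S) (y : S)
    (g : MvPolynomial (Fin (n + 1)) R) :
    aeval (Fin.cons y x) g = (finSuccEquiv R n g).eval₂ (aeval x).toRingHom y := by
  induction g using MvPolynomial.induction_on with
  | C a => simp [finSuccEquiv_apply]
  | add p q hp hq => simp [hp, hq]
  | mul_X p i h =>
    cases i using Fin.cases <;> simp [h, finSuccEquiv_X_zero, finSuccEquiv_X_succ]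

theorem continuous_aeval {σ : Type*} [TopologicalSpace S] [IsTopologicalSemiring S]
    (c : MvPolynomial σ R) : Continuous fun x : σ → S => aeval x c := by
  simpa only [aeval_def, ← eval_map] using continuous_eval _

theorem continuous_eval₂_aeval {σ : Type*} [TopologicalSpace S] [IsTopologicalSemiring S]
    (M : (MvPolynomial σ R)[X]) (z : S) :
    Continuous fun x : σ → S => M.eval₂ (aeval x).toRingHom z := by
  simp only [Polynomial.eval₂_eq_sum_range]
  exact continuous_finsetSum _ fun i _ => (continuous_aeval _).mul continuous_const

end MvPolynomial

theorem IntermediateField.aeval_mem {F E σ : Type*} [Field F] [Field E] [Algebra F E]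
    {K : IntermediateField F E} {x : σ → E} (hx : ∀ i, x i ∈ K) (c : MvPolynomial σ K) :
    MvPolynomial.aeval x c ∈ K := by
  have := MvPolynomial.aeval_algebraMap_apply (B := E) (fun i => (⟨x i, hx i⟩ : K)) c
  exact this ▸ Subtype.prop _

open Polynomial in
theorem mem_algebraicClosure_of_isRoot {F E : Type*} [Field F] [Field E] [Algebra F E]
    {f : E[X]} (hf : f ≠ 0) (hcoeff : ∀ k, f.coeff k ∈ algebraicClosure F E) {w : E}
    (hw : f.IsRoot w) : w ∈ algebraicClosure F E := by
  obtain ⟨f₀, rfl⟩ := (lifts_iff_coeff_lifts (f := algebraMap (algebraicClosure F E) E) f).2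
    fun k => ⟨⟨_, hcoeff k⟩, rfl⟩
  have : IsAlgebraic (algebraicClosure F E) w :=
    ⟨f₀, by rintro rfl; simp at hf, by simpa [aeval_def, eval_map] using hw⟩
  exact mem_algebraicClosure_iff.2 (by_contra fun h => Transcendental.algebraicClosure h this)

theorem dense_algebraicClosure_rat_complex : Dense (ℚ̄ : Set ℂ) := by
  have hI : Complex.I ∈ ℚ̄ := mem_algebraicClosure_iff'.2
    (IsIntegral.of_pow four_pos (by rw [Complex.I_pow_four]; exact isIntegral_one))
  have hsurj : Function.Surjective fun p : ℝ × ℝ => (p.1 : ℂ) + p.2 * Complex.I :=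
    fun z => ⟨(z.re, z.im), Complex.re_add_im z⟩
  have hdense : DenseRange fun q : ℚ × ℚ => ((q.1 : ℝ) : ℂ) + (q.2 : ℝ) * Complex.I :=
    hsurj.denseRange.comp (Rat.denseRange_cast.prodMap Rat.denseRange_cast) (by fun_prop)
  refine hdense.mono ?_
  rintro _ ⟨q, rfl⟩
  simp only [Complex.ofReal_ratCast]
  exact add_mem (SubfieldClass.ratCast_mem _ _) (mul_mem (SubfieldClass.ratCast_mem _ _) hI)

theorem exists_mem_algebraicClosure_dist_lt_norm_ne_one (z : ℂ) {ε : ℝ} (hε : 0 < ε) :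
    ∃ w ∈ ℚ̄, dist w z < ε ∧ ‖w‖ ≠ 1 := by
  have hU : Dense (Metric.sphere (0 : ℂ) 1)ᶜ :=
    interior_eq_empty_iff_dense_compl.1 (interior_sphere' 0 1)
  obtain ⟨w, ⟨hw1, hw⟩, hwz⟩ := (hU.inter_of_isOpen_left dense_algebraicClosure_rat_complex
    Metric.isClosed_sphere.isOpen_compl).exists_mem_open Metric.isOpen_ball
    ⟨z, Metric.mem_ball_self hε⟩
  exact ⟨w, hw, hwz, by simpa using hw1⟩

theorem Fin.dist_cons_cons_lt {α : Type*} [PseudoMetricSpace α] {n : ℕ} {a b : α}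
    {x y : Fin n → α} {ε : ℝ} (hab : dist a b < ε) (hxy : dist x y < ε) :
    dist (Fin.cons a x : Fin (n + 1) → α) (Fin.cons b y) < ε :=
  (dist_pi_lt_iff (dist_nonneg.trans_lt hab)).2 <| Fin.forall_fin_succ.2
    ⟨by simpa using hab, fun i => by simpa using (dist_le_pi_dist x y i).trans_lt hxy⟩

open MvPolynomial

section Approximation

variable {n : ℕ}

/-- The last field keeps `q` away from the torsion points when `p` is not itself algebraic. -/
structure IsAlgebraicApprox (ε : ℝ) (p q : Fin n → ℂ) : Prop where
  mem : ∀ i, q i ∈ ℚ̄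
  dist_lt : dist q p < ε
  aeval_eq_zero : ∀ g : MvPolynomial (Fin n) ℚ̄, aeval p g = 0 → aeval q g = 0
  exists_norm_ne_one : (∃ i, p i ∉ ℚ̄) → ∃ i, ‖q i‖ ≠ 1

theorem mem_algebraicClosure_of_eval₂_aeval_eq_zero {x : Fin n → ℂ} (hx : ∀ i, x i ∈ ℚ̄)
    {M : (MvPolynomial (Fin n) ℚ̄)[X]} (hlc : aeval x M.leadingCoeff ≠ 0) {w : ℂ}
    (hw : M.eval₂ (aeval x).toRingHom w = 0) : w ∈ ℚ̄ := by
  refine mem_algebraicClosure_of_isRoot (f := M.map (aeval x).toRingHom) ?_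
    (fun k => by rw [Polynomial.coeff_map]; exact IntermediateField.aeval_mem hx _)
    (by simpa [Polynomial.IsRoot, Polynomial.eval_map])
  rwa [← Polynomial.leadingCoeff_ne_zero,
    Polynomial.leadingCoeff_map_of_leadingCoeff_ne_zero _ hlc]

theorem exists_isRoot_map_near {x : Fin n → ℂ} {z : ℂ} {M : (MvPolynomial (Fin n) ℚ̄)[X]}
    (hlc : aeval x M.leadingCoeff ≠ 0) (hMz : M.eval₂ (aeval x).toRingHom z = 0)
    {ε : ℝ} (hε : 0 < ε) :
    ∃ δ > 0, ∀ y, dist y x < δ → aeval y M.leadingCoeff ≠ 0 ∧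
      ∃ w, (M.map (aeval y).toRingHom).IsRoot w ∧ dist w z < ε := by
  have hD : 0 < M.natDegree := by
    refine Nat.pos_of_ne_zero fun hD => hlc ?_
    rw [Polynomial.eq_C_of_natDegree_eq_zero hD, Polynomial.eval₂_C] at hMz
    rwa [Polynomial.leadingCoeff, hD]
  have hopen : IsOpen {y : Fin n → ℂ |
      ‖M.eval₂ (aeval y).toRingHom z‖ < ‖aeval y M.leadingCoeff‖ * ε ^ M.natDegree} :=
    isOpen_lt (continuous_eval₂_aeval M z).norm
      ((continuous_aeval _).norm.mul continuous_const)
  obtain ⟨δ, hδ, hball⟩ := Metric.isOpen_iff.1 hopen x <| by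
    rw [Set.mem_ofPred_eq, hMz, norm_zero]
    exact mul_pos (norm_pos_iff.2 hlc) (pow_pos hε _)
  refine ⟨δ, hδ, fun y hy => ?_⟩
  have hsmall : ‖M.eval₂ (aeval y).toRingHom z‖ <
      ‖aeval y M.leadingCoeff‖ * ε ^ M.natDegree := hball hy
  have hlcy : aeval y M.leadingCoeff ≠ 0 := by
    rintro h
    simp only [h, norm_zero, zero_mul] at hsmall
    exact (norm_nonneg _).not_gt hsmall
  obtain ⟨w, hw, hwz⟩ := Polynomial.exists_isRoot_norm_sub_pow_le
    (by rwa [Polynomial.natDegree_map_of_leadingCoeff_ne_zero _ hlcy]) z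
  refine ⟨hlcy, w, hw, ?_⟩
  rw [Polynomial.natDegree_map_of_leadingCoeff_ne_zero _ hlcy,
    Polynomial.leadingCoeff_map_of_leadingCoeff_ne_zero _ hlcy, Polynomial.eval_map] at hwz
  rw [dist_comm, dist_eq_norm]
  exact lt_of_pow_lt_pow_left₀ _ hε.le
    (lt_of_mul_lt_mul_left (hwz.trans_lt hsmall) (norm_nonneg _))

theorem exists_isAlgebraicApprox_cons_of_annihilator {x : Fin n → ℂ} {z : ℂ}
    {M : (MvPolynomial (Fin n) ℚ̄)[X]}
    (hlc : aeval x M.leadingCoeff ≠ 0) (hMz : M.eval₂ (aeval x).toRingHom z = 0)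
    (hdiv : ∀ G : (MvPolynomial (Fin n) ℚ̄)[X], G.eval₂ (aeval x).toRingHom z = 0 →
      ∃ (k : ℕ) (Q R : (MvPolynomial (Fin n) ℚ̄)[X]),
        Polynomial.C M.leadingCoeff ^ k * G = Q * M + R ∧ R.map (aeval x).toRingHom = 0)
    (ih : ∀ δ > 0, ∃ y, IsAlgebraicApprox δ x y) {ε : ℝ} (hε : 0 < ε) :
    ∃ q, IsAlgebraicApprox ε (Fin.cons z x) q := by
  obtain ⟨δ, hδ, hnear⟩ := exists_isRoot_map_near hlc hMz hε
  obtain ⟨y, hy⟩ := ih (min ε δ) (lt_min hε hδ)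
  obtain ⟨hlcy, w, hw, hwz⟩ := hnear y (hy.dist_lt.trans_le (min_le_right _ _))
  have hMw : M.eval₂ (aeval y).toRingHom w = 0 := by rwa [← Polynomial.eval_map]
  refine ⟨Fin.cons w y,
    Fin.cases (mem_algebraicClosure_of_eval₂_aeval_eq_zero hy.mem hlcy hMw) hy.mem,
    Fin.dist_cons_cons_lt hwz (hy.dist_lt.trans_le (min_le_left _ _)), fun g hg => ?_,
    fun ⟨i, hi⟩ => ?_⟩
  · rw [aeval_cons_eq_eval₂_finSuccEquiv] at hg ⊢
    obtain ⟨k, Q, R, hQR, hR⟩ := hdiv _ hg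
    have hRw : R.eval₂ (aeval y).toRingHom w = 0 := by
      rw [← Polynomial.eval_map, Polynomial.map_eq_zero_of_forall hy.aeval_eq_zero hR,
        Polynomial.eval_zero]
    have := congrArg (Polynomial.eval₂ (aeval y).toRingHom w) hQR
    rw [Polynomial.eval₂_mul, Polynomial.eval₂_add, Polynomial.eval₂_mul, hMw, hRw,
      Polynomial.eval₂_pow, Polynomial.eval₂_C, mul_zero, add_zero] at this
    exact (mul_eq_zero.1 this).resolve_left (pow_ne_zero _ hlcy)
  · have hx : ∃ j, x j ∉ ℚ̄ := by
      by_contra! hx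
      exact hi (Fin.cases (mem_algebraicClosure_of_eval₂_aeval_eq_zero hx hlc hMz) hx i)
    obtain ⟨j, hj⟩ := hy.exists_norm_ne_one hx
    exact ⟨j.succ, hj⟩

theorem exists_isAlgebraicApprox_cons_of_forall_eval₂_ne_zero {x : Fin n → ℂ} {z : ℂ}
    (hz : ∀ N : (MvPolynomial (Fin n) ℚ̄)[X], aeval x N.leadingCoeff ≠ 0 →
      N.eval₂ (aeval x).toRingHom z ≠ 0)
    (ih : ∀ δ > 0, ∃ y, IsAlgebraicApprox δ x y) {ε : ℝ} (hε : 0 < ε) :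
    ∃ q, IsAlgebraicApprox ε (Fin.cons z x) q := by
  obtain ⟨y, hy⟩ := ih ε hε
  obtain ⟨w, hw, hwz, hw1⟩ := exists_mem_algebraicClosure_dist_lt_norm_ne_one z hε
  refine ⟨Fin.cons w y, Fin.cases hw hy.mem, Fin.dist_cons_cons_lt hwz hy.dist_lt,
    fun g hg => ?_, fun _ => ⟨0, hw1⟩⟩
  rw [aeval_cons_eq_eval₂_finSuccEquiv] at hg ⊢
  rw [← Polynomial.eval_map, Polynomial.map_eq_zero_of_forall hy.aeval_eq_zero
    (Polynomial.map_eq_zero_of_eval₂_eq_zero _ z hz hg), Polynomial.eval_zero]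

theorem exists_isAlgebraicApprox : ∀ {n : ℕ} (p : Fin n → ℂ) {ε : ℝ}, 0 < ε →
    ∃ q, IsAlgebraicApprox ε p q
  | 0, p, _, hε => ⟨p, finZeroElim, by rwa [dist_self], fun _ h => h, fun ⟨i, _⟩ => i.elim0⟩
  | n + 1, p, ε, hε => by
    have ih (δ : ℝ) (hδ : 0 < δ) : ∃ y, IsAlgebraicApprox δ (Fin.tail p) y :=
      exists_isAlgebraicApprox (Fin.tail p) hδ
    rw [← Fin.cons_self_tail p]
    by_cases h : ∃ N : (MvPolynomial (Fin n) ℚ̄)[X], aeval (Fin.tail p) N.leadingCoeff ≠ 0 ∧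
      N.eval₂ (aeval (Fin.tail p)).toRingHom (p 0) = 0
    · obtain ⟨M, hlc, hMz, hdiv⟩ := Polynomial.exists_minimal_annihilator _ _ h
      exact exists_isAlgebraicApprox_cons_of_annihilator hlc hMz hdiv ih hε
    · push Not at h
      exact exists_isAlgebraicApprox_cons_of_forall_eval₂_ne_zero h ih hε

theorem mem_closure_algebraic_specializations {p : Fin n → ℂ} (hp : ∃ i, p i ∉ ℚ̄) :
    p ∈ closure {q | (∀ i, q i ∈ ℚ̄) ∧
      (∀ g : MvPolynomial (Fin n) ℚ̄, aeval p g = 0 → aeval q g = 0) ∧ ∃ i, ‖q i‖ ≠ 1} :=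
  Metric.mem_closure_iff.2 fun _ hε =>
    let ⟨q, hq⟩ := exists_isAlgebraicApprox p hε
    ⟨q, ⟨hq.mem, hq.aeval_eq_zero, hq.exists_norm_ne_one hp⟩, dist_comm p q ▸ hq.dist_lt⟩

end Approximation

theorem MvPolynomial.eval_eq_zero_of_forall_aeval {σ : Type*} {P : MvPolynomial σ ℂ}
    (hP : ∀ m, IsAlgebraic ℚ (P.coeff m)) {p q : σ → ℂ}
    (hpq : ∀ g : MvPolynomial σ ℚ̄, aeval p g = 0 → aeval q g = 0) (h : eval p P = 0) :
    eval q P = 0 := by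
  obtain ⟨P, rfl⟩ : P ∈ Set.range (map (algebraMap ℚ̄ ℂ)) :=
    mem_range_map_iff_coeffs_subset.2 fun c hc => by
      obtain ⟨m, -, rfl⟩ := mem_coeffs_iff.1 hc
      exact ⟨⟨_, mem_algebraicClosure_iff.2 (hP m)⟩, rfl⟩
  rw [eval_map, ← aeval_def] at h ⊢
  exact hpq P h

theorem mem_closure_of_val_mem_closure {G₀ ι : Type*} [GroupWithZero G₀] [TopologicalSpace G₀]
    [ContinuousInv₀ G₀] [T1Space G₀] [Finite ι] {A : Set (ι → G₀ˣ)} {B : Set (ι → G₀)}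
    (hBA : ∀ q : ι → G₀ˣ, (fun i => (q i : G₀)) ∈ B → q ∈ A) {p : ι → G₀ˣ}
    (hp : (fun i => (p i : G₀)) ∈ closure B) : p ∈ closure A := by
  have he : Topology.IsEmbedding fun (q : ι → G₀ˣ) i => (q i : G₀) :=
    .piMap fun _ => Units.isEmbedding_val₀
  have hU : IsOpen {x : ι → G₀ | ∀ i, x i ≠ 0} := by
    simp only [Set.ofPred_forall]
    exact isOpen_iInter_of_finite fun i => isOpen_ne.preimage (continuous_apply i)
  rw [he.closure_eq_preimage_closure_image]
  refine closure_mono ?_ (hU.inter_closure ⟨fun i => (p i).ne_zero, hp⟩)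
  rintro x ⟨hx0, hxB⟩
  exact ⟨fun i => Units.mk0 (x i) (hx0 i), hBA _ hxB, rfl⟩

theorem mem_closure_algebraic_infinite_order_points_general
    (n : ℕ) (S : Set (MvPolynomial (Fin n) ℂ))
    (hS : ∀ P ∈ S, ∀ m, IsAlgebraic ℚ (MvPolynomial.coeff m P))
    (Z : Set (Fin n → ℂˣ))
    (hZ : Z = {x : Fin n → ℂˣ | ∀ P ∈ S, MvPolynomial.eval (fun i => (x i : ℂ)) P = 0})
    (p : Fin n → ℂˣ) (hp : p ∈ Z) (hord : ¬ IsOfFinOrder p) :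
    p ∈ closure {q : Fin n → ℂˣ |
      q ∈ Z ∧ (∀ i, IsAlgebraic ℚ ((q i : ℂ))) ∧ ¬ IsOfFinOrder q} := by
  by_cases halg : ∀ i, IsAlgebraic ℚ (p i : ℂ)
  · exact subset_closure ⟨hp, halg, hord⟩
  push Not at halg
  obtain ⟨i, hi⟩ := halg
  subst hZ
  refine mem_closure_of_val_mem_closure ?_
    (mem_closure_algebraic_specializations ⟨i, mt mem_algebraicClosure_iff.1 hi⟩)
  rintro q ⟨hq, hpq, j, hj⟩
  exact ⟨fun P hP => eval_eq_zero_of_forall_aeval (hS P hP) hpq (hp P hP),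
    fun i => mem_algebraicClosure_iff.1 (hq i),
    fun hfin => hj (Units.isOfFinOrder_val.2 (hfin.apply j)).norm_eq_one⟩

/-- If `Z ⊆ (ℂˣ)ⁿ` is the set of common zeros (lying in `(ℂˣ)ⁿ`) of a family of
polynomials with algebraic coefficients, then any point of `Z` of infinite order in the
group `(ℂˣ)ⁿ` is in the closure of the set of points of `Z` with algebraic coordinates
and infinite order. -/
theorem mem_closure_algebraic_infinite_order_points
    (n : ℕ) (hn : 1 ≤ n) (S : Set (MvPolynomial (Fin n) ℂ))
    (hS : ∀ P ∈ S, ∀ m, IsAlgebraic ℚ (MvPolynomial.coeff m P))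
    (Z : Set (Fin n → ℂˣ))
    (hZ : Z = {x : Fin n → ℂˣ | ∀ P ∈ S, MvPolynomial.eval (fun i => (x i : ℂ)) P = 0})
    (p : Fin n → ℂˣ) (hp : p ∈ Z) (hord : ¬ IsOfFinOrder p) :
    p ∈ closure {q : Fin n → ℂˣ |
      q ∈ Z ∧ (∀ i, IsAlgebraic ℚ ((q i : ℂ))) ∧ ¬ IsOfFinOrder q} :=
  mem_closure_algebraic_infinite_order_points_general n S hS Z hZ p hp hord
end

section
/- If G is a finitely generated nilpotent group, then the torsion elements of G form a finite subgroup of G. -/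
/-!
In a nilpotent group, finitely many torsion elements generate a finite subgroup. By induction on
the class, `G ⧸ Z(G)` is finite; then the transfer `g ↦ g ^ [G : Z(G)]`, a homomorphism into the
abelian group `Z(G)`, sends the generators to torsion elements, so `G` is torsion, and `Z(G)`,
finitely generated by Schreier's lemma, is finite. Hence the torsion elements form a subgroup `T`.

If `G` is finitely generated and its lower central series has `γ (c + 1) = 1`, then `γ c` is
central and finitely generated, since modulo `γ (i + 2)` the term `γ (i + 1)` is generated by the
commutators of generators of `γ i` modulo `γ (i + 1)` with generators of `G`. So `T ∩ γ c` is finite, and by induction on `c`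
so is the image of `T` in `G ⧸ γ c`.
-/

open Subgroup
open scoped commutatorElement

theorem CommGroup.finite_torsion_of_fg (A : Type*) [CommGroup A] [Group.FG A] :
    Finite (CommGroup.torsion A) := by
  have : Group.FG (CommGroup.torsion A) := by
    rw [Group.fg_iff_subgroup_fg, Subgroup.fg_iff_add_fg]
    have : Module.Finite ℤ (Additive A) := Module.Finite.iff_addGroup_fg.mpr inferInstance
    have :=
      IsNoetherian.noetherian (AddSubgroup.toIntSubmodule (CommGroup.torsion A).toAddSubgroup)
    rwa [Submodule.fg_iff_addSubgroup_fg, AddSubgroup.toIntSubmodule_toAddSubgroup] at this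
  exact CommGroup.finite_of_fg_isMulTorsion _ fun t => Submonoid.isOfFinOrder_coe.mp t.2

theorem Subgroup.finite_of_finite_map_of_finite_inf_ker {G G' : Type*} [Group G] [Group G']
    (f : G →* G') (H : Subgroup G) [Finite (H.map f)] [Finite ↥(H ⊓ f.ker)] : Finite H := by
  refine (f.comp H.subtype).finite_iff_finite_ker_range.mpr ⟨?_, ?_⟩
  · exact Finite.of_injective (fun x => (⟨x.1.1, x.1.2, x.2⟩ : ↥(H ⊓ f.ker)))
      fun x y hxy => Subtype.ext (Subtype.ext (congrArg Subtype.val hxy :))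
  · rwa [MonoidHom.range_comp, range_subtype]

section Commutator

variable {G : Type*} [Group G]

theorem commutatorElement_mul_left_of_mem_center {a b g : G} (h : ⁅b, g⁆ ∈ center G) :
    ⁅a * b, g⁆ = ⁅a, g⁆ * ⁅b, g⁆ := by
  rw [commutatorElement_mul_left_eq_conj_mul, mem_center_iff.mp h a, mul_inv_cancel_right,
    mem_center_iff.mp h]

theorem commutatorElement_mul_right_of_mem_center {a g h : G} (hc : ⁅a, h⁆ ∈ center G) :
    ⁅a, g * h⁆ = ⁅a, g⁆ * ⁅a, h⁆ := by
  rw [commutatorElement_mul_right_eq_mul_conj, mul_assoc _ g, mem_center_iff.mp hc g,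
    ← mul_assoc, mul_inv_cancel_right]

namespace Subgroup

theorem commutator_top_eq_closure_image2 {H : Subgroup G} {X S : Set G}
    (hcentral : ⁅H, ⊤⁆ ≤ center G) (hX : closure X ⊔ ⁅H, ⊤⁆ = H) (hS : closure S = ⊤) :
    ⁅H, ⊤⁆ = closure (Set.image2 (⁅·, ·⁆) X S) := by
  set K := closure (Set.image2 (⁅·, ·⁆) X S)
  have hXH : X ⊆ H := fun x hx => (le_sup_left.trans hX.le) (subset_closure hx)
  have hcomm : ∀ h ∈ H, ∀ g, ⁅h, g⁆ ∈ center G :=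
    fun h hh g => hcentral (commutator_mem_commutator hh (mem_top g))
  -- as `⁅H, ⊤⁆` is central, `g ↦ ⁅x, g⁆` (for `x ∈ H`) and `h ↦ ⁅h, g⁆` (on `H`) are homomorphisms
  have hXK : ∀ x ∈ X, ∀ g, ⁅x, g⁆ ∈ K := by
    intro x hx g
    let f : G →* G := MonoidHom.mk' (⁅x, ·⁆) fun _ b =>
      commutatorElement_mul_right_of_mem_center (hcomm x (hXH hx) b)
    have : closure S ≤ K.comap f :=
      (closure_le _).mpr fun s hs => subset_closure (Set.mem_image2_of_mem hx hs)
    exact this (hS ▸ mem_top g)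
  refine le_antisymm (commutator_le.mpr fun h hh g _ => ?_) ((closure_le _).mpr ?_)
  · let f : H →* G := MonoidHom.mk' (fun h => ⁅(h : G), g⁆) fun _ b =>
      commutatorElement_mul_left_of_mem_center (hcomm b b.2 g)
    have : H ≤ (K.comap f).map H.subtype := by
      conv_lhs => rw [← hX]
      refine sup_le ((closure_le _).mpr fun x hx => ⟨⟨x, hXH hx⟩, hXK x hx g, rfl⟩) fun u hu => ?_
      refine ⟨⟨u, le_sup_right.trans hX.le hu⟩, ?_, rfl⟩
      have : ⁅u, g⁆ = 1 :=
        commutatorElement_eq_one_iff_mul_comm.mpr (mem_center_iff.mp (hcentral hu) g).symm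
      simp [f, this]
    obtain ⟨_, hK, rfl⟩ := this hh
    exact hK
  · rintro _ ⟨x, hx, s, -, rfl⟩
    exact commutator_mem_commutator (hXH hx) (mem_top s)

theorem closure_image2_sup_lowerCentralSeries {X S : Set G} {i : ℕ} (hS : closure S = ⊤)
    (hX : closure X ⊔ lowerCentralSeries ⊤ (i + 1) = lowerCentralSeries ⊤ i) :
    closure (Set.image2 (⁅·, ·⁆) X S) ⊔ lowerCentralSeries ⊤ (i + 2) =
      lowerCentralSeries (⊤ : Subgroup G) (i + 1) := by
  set N := lowerCentralSeries (⊤ : Subgroup G) (i + 2)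
  let π := QuotientGroup.mk' N
  have hmap (n : ℕ) : (lowerCentralSeries ⊤ n).map π = lowerCentralSeries ⊤ n := by
    rw [map_lowerCentralSeries, map_top_of_surjective _ (QuotientGroup.mk'_surjective N)]
  have hcentral : ⁅lowerCentralSeries (⊤ : Subgroup (G ⧸ N)) i, ⊤⁆ ≤ center (G ⧸ N) := by
    rw [← commutator_top_right_eq_bot_iff_le_center]
    change lowerCentralSeries ⊤ (i + 2) = ⊥
    rw [← hmap, map_eq_bot_iff, QuotientGroup.ker_mk']
  have hX' : closure (π '' X) ⊔ ⁅lowerCentralSeries (⊤ : Subgroup (G ⧸ N)) i, ⊤⁆ =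
      lowerCentralSeries ⊤ i := by
    rw [← lowerCentralSeries_succ, ← MonoidHom.map_closure, ← hmap, ← hmap, ← map_sup, hX]
  have hS' : closure (π '' S) = ⊤ := by
    rw [← MonoidHom.map_closure, hS, map_top_of_surjective _ (QuotientGroup.mk'_surjective N)]
  have key := commutator_top_eq_closure_image2 hcentral hX' hS'
  rw [← lowerCentralSeries_succ, ← hmap,
    ← Set.image_image2_distrib fun a b => map_commutatorElement π a b,
    ← MonoidHom.map_closure] at key
  have := congrArg (comap π) key
  rwa [comap_map_eq, comap_map_eq, QuotientGroup.ker_mk',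
    sup_eq_left.mpr (lowerCentralSeries_antitone _ (Nat.le_succ _)), eq_comm] at this

theorem exists_finite_closure_sup_lowerCentralSeries [Group.FG G] (i : ℕ) :
    ∃ X : Set G, X.Finite ∧
      closure X ⊔ lowerCentralSeries ⊤ (i + 1) = lowerCentralSeries (⊤ : Subgroup G) i := by
  obtain ⟨S, hS, hSfin⟩ := Group.fg_iff.mp ‹_›
  induction i with
  | zero => exact ⟨S, hSfin, by simp [hS]⟩
  | succ i ih =>
    obtain ⟨X, hXfin, hX⟩ := ih
    exact ⟨_, hXfin.image2 (⁅·, ·⁆) hSfin, closure_image2_sup_lowerCentralSeries hS hX⟩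

theorem lowerCentralSeries_fg_of_succ_eq_bot [Group.FG G] {i : ℕ}
    (h : lowerCentralSeries (⊤ : Subgroup G) (i + 1) = ⊥) :
    (lowerCentralSeries (⊤ : Subgroup G) i).FG := by
  obtain ⟨X, hXfin, hX⟩ := exists_finite_closure_sup_lowerCentralSeries (G := G) i
  rw [h, sup_bot_eq] at hX
  exact (fg_iff _).mpr ⟨X, hX, hXfin⟩

end Subgroup

end Commutator

namespace Group.IsNilpotent

open scoped IsMulCommutative in
theorem finite_of_closure_eq_top_of_isOfFinOrder {G : Type*} [Group G] [IsNilpotent G] {S : Set G}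
    (hS : S.Finite) (hgen : closure S = ⊤) (htor : ∀ s ∈ S, IsOfFinOrder s) : Finite G := by
  refine Group.nilpotent_center_quotient_ind
    (P := fun G _ _ => ∀ S : Set G, S.Finite → closure S = ⊤ → (∀ s ∈ S, IsOfFinOrder s) →
      Finite G) G (fun _ _ _ _ _ _ _ => inferInstance) (fun G _ _ ih S hS hgen htor => ?_)
    S hS hgen htor
  let π := QuotientGroup.mk' (center G)
  have : Finite (G ⧸ center G) := by
    refine ih (π '' S) (hS.image π) ?_ ?_
    · rw [← MonoidHom.map_closure, hgen, map_top_of_surjective _ (QuotientGroup.mk'_surjective _)]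
    · rintro _ ⟨s, hs, rfl⟩
      exact π.isOfFinOrder (htor s hs)
  have : (center G).FiniteIndex := finiteIndex_of_finite_quotient
  have : Group.FG G := Group.fg_iff.mpr ⟨S, hgen, hS⟩
  -- the transfer `g ↦ g ^ [G : Z(G)]` is a homomorphism into the abelian group `Z(G)`
  have hG : IsMulTorsion G := by
    have hrange : (MonoidHom.transferCenterPow G).range ≤ CommGroup.torsion (center G) := by
      rw [MonoidHom.range_eq_map, ← hgen, MonoidHom.map_closure, closure_le]
      rintro _ ⟨s, hs, rfl⟩
      exact (MonoidHom.transferCenterPow G).isOfFinOrder (htor s hs)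
    intro g
    have hpow : IsOfFinOrder (g ^ (center G).index) :=
      Submonoid.isOfFinOrder_coe.mpr (hrange ⟨g, rfl⟩)
    exact (isOfFinOrder_pow.mp hpow).resolve_right FiniteIndex.index_ne_zero
  have : Finite (center G) :=
    CommGroup.finite_of_fg_isMulTorsion _ fun z => Submonoid.isOfFinOrder_coe.mp (hG z)
  exact (finite_iff_finite_and_finiteIndex (center G)).mpr ⟨inferInstance, inferInstance⟩

theorem isOfFinOrder_mul {G : Type*} [Group G] [IsNilpotent G] {x y : G}
    (hx : IsOfFinOrder x) (hy : IsOfFinOrder y) : IsOfFinOrder (x * y) := by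
  let K := closure ({x, y} : Set G)
  have hxK : x ∈ K := subset_closure (by simp)
  have hyK : y ∈ K := subset_closure (by simp)
  have : Finite K := by
    refine finite_of_closure_eq_top_of_isOfFinOrder (S := ((↑) : K → G) ⁻¹' {x, y})
      ((Set.toFinite _).preimage Subtype.val_injective.injOn) closure_closure_coe_preimage ?_
    rintro ⟨s, _⟩ (rfl | rfl : s = x ∨ s = y)
    · exact Submonoid.isOfFinOrder_coe.mp hx
    · exact Submonoid.isOfFinOrder_coe.mp hy
  exact Submonoid.isOfFinOrder_coe.mpr (isOfFinOrder_of_finite (⟨x * y, mul_mem hxK hyK⟩ : K))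

def torsion (G : Type*) [Group G] [IsNilpotent G] : Subgroup G where
  carrier := {g | IsOfFinOrder g}
  one_mem' := IsOfFinOrder.one
  mul_mem' := isOfFinOrder_mul
  inv_mem' := IsOfFinOrder.inv

open scoped IsMulCommutative in
theorem finite_torsion_of_lowerCentralSeries_eq_bot {G : Type*} [Group G] [Group.FG G]
    [IsNilpotent G] {c : ℕ} (h : (⊤ : Subgroup G).lowerCentralSeries c = ⊥) :
    Finite (torsion G) := by
  induction c generalizing G with
  | zero =>
    have : Subsingleton G := subsingleton_iff.mp (subsingleton_of_bot_eq_top h.symm)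
    infer_instance
  | succ c ih =>
    set Z := (⊤ : Subgroup G).lowerCentralSeries c
    let π := QuotientGroup.mk' Z
    have hZ : Z ≤ center G := commutator_top_right_eq_bot_iff_le_center.mp h
    have : Group.FG Z := (Group.fg_iff_subgroup_fg Z).mpr (lowerCentralSeries_fg_of_succ_eq_bot h)
    have : IsMulCommutative Z := ⟨⟨fun a b => Subtype.ext (mem_center_iff.mp (hZ a.2) b).symm⟩⟩
    have : Finite (CommGroup.torsion Z) := CommGroup.finite_torsion_of_fg Z
    have : Finite (torsion (G ⧸ Z)) := ih <| by
      rw [← map_top_of_surjective π (QuotientGroup.mk'_surjective Z), ← map_lowerCentralSeries,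
        Subgroup.map_eq_bot_iff, QuotientGroup.ker_mk']
    have : Finite ((torsion G).map π) := by
      refine ((torsion (G ⧸ Z) : Set (G ⧸ Z)).toFinite.subset ?_).to_subtype
      rintro _ ⟨g, hg, rfl⟩
      exact π.isOfFinOrder hg
    have : Finite ↥(torsion G ⊓ π.ker) := by
      refine ((Set.toFinite (CommGroup.torsion Z)).image Z.subtype |>.subset ?_).to_subtype
      rintro g ⟨hg, hgZ⟩
      rw [SetLike.mem_coe, QuotientGroup.ker_mk'] at hgZ
      exact ⟨⟨g, hgZ⟩, Submonoid.isOfFinOrder_coe.mp hg, rfl⟩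
    exact finite_of_finite_map_of_finite_inf_ker π (torsion G)

end Group.IsNilpotent

/-- In a finitely generated nilpotent group, the torsion elements form a finite
subgroup. -/
theorem torsion_of_fg_nilpotent_is_finite_subgroup
    (G : Type) [Group G] (hfg : Group.FG G) (hnil : Group.IsNilpotent G) :
    ∃ H : Subgroup G, (H : Set G) = {g : G | IsOfFinOrder g} ∧ (H : Set G).Finite := by
  obtain ⟨c, hc⟩ := Subgroup.nilpotent_iff_lowerCentralSeries.mp hnil
  have := Group.IsNilpotent.finite_torsion_of_lowerCentralSeries_eq_bot hc
  exact ⟨Group.IsNilpotent.torsion G, rfl, Set.toFinite _⟩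
end

section
/- Every finitely generated residually nilpotent group is residually finite. That is, if G is a finitely generated group such that for every g ∈ G with g ≠ 1 there exists a normal subgroup N of G with g ∉ N and G/N nilpotent, then for every g ∈ G with g ≠ 1 there exists a normal subgroup M of G with g ∉ M and G/M finite. -/
/-!
A finitely generated nilpotent group is residually finite; the theorem follows by applying this
to the nilpotent quotients `G ⧸ N`.

For the nilpotent case, let `M` be maximal (Zorn) among the normal subgroups avoiding `g ≠ 1`.
In `Q = G ⧸ M` the image of `g` lies in every nontrivial normal subgroup. Central subgroups are
normal, so a central element `z` of infinite order would put the image of `g` into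
`⋂ n, ⟨z ^ n⟩ = 1`; hence `Z(Q)` is torsion. In a finitely generated nilpotent group a torsion
centre forces finiteness, by induction on the class: if `x Z` is central in `Q ⧸ Z`, then
`s ↦ ⁅x, s⁆` takes values in `Z` and `⁅x ^ n, s⁆ = ⁅x, s⁆ ^ n`, so a power of `x` is central and
`Z(Q ⧸ Z)` is torsion too. Thus `Q ⧸ Z` is finite, and `Z`, a finitely generated torsion abelian
group of finite index, is finite.
-/

open Subgroup
open scoped commutatorElement

section

variable {G : Type*} [Group G]

theorem Subgroup.normal_of_le_center {H : Subgroup G} (h : H ≤ center G) : H.Normal :=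
  ⟨fun a ha b => by rwa [mem_center_iff.mp (h ha) b, mul_inv_cancel_right]⟩

theorem commutatorElement_pow_left_of_mem_center {x y : G} (h : ⁅x, y⁆ ∈ center G) (n : ℕ) :
    ⁅x ^ n, y⁆ = ⁅x, y⁆ ^ n := by
  induction n with
  | zero => simp
  | succ n ih =>
    calc ⁅x ^ (n + 1), y⁆ = x ^ n * (⁅x, y⁆ * y) * (x ^ n)⁻¹ * y⁻¹ := by
          simp only [commutatorElement_def]; group
      _ = ⁅x, y⁆ * ⁅x ^ n, y⁆ := by
          rw [← mul_assoc (x ^ n), mem_center_iff.mp h, commutatorElement_def (x ^ n)]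
          simp only [mul_assoc]
      _ = ⁅x, y⁆ ^ (n + 1) := by rw [ih, pow_succ']

theorem exists_pow_mem_center_of_commutatorElement_mem_center [Group.FG G]
    (hZ : IsMulTorsion (center G)) {x : G} (hx : ∀ y, ⁅x, y⁆ ∈ center G) :
    ∃ n, 0 < n ∧ x ^ n ∈ center G := by
  obtain ⟨S, hS⟩ := Group.FG.out (G := G)
  have hfin (y : G) : IsOfFinOrder ⁅x, y⁆ := Submonoid.isOfFinOrder_coe.mpr (hZ ⟨_, hx y⟩)
  refine ⟨∏ s ∈ S, orderOf ⁅x, s⁆, Finset.prod_pos fun s _ => (hfin s).orderOf_pos, ?_⟩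
  rw [center_eq_iInf hS]
  simp only [mem_iInf]
  intro s hs
  rw [mem_centralizer_singleton_iff, ← commutatorElement_eq_one_iff_mul_comm,
    commutatorElement_pow_left_of_mem_center (hx s), ← orderOf_dvd_iff_pow_eq_one]
  exact Finset.dvd_prod_of_mem _ hs

theorem isMulTorsion_center_quotient_center [Group.FG G] (hZ : IsMulTorsion (center G)) :
    IsMulTorsion (center (G ⧸ center G)) := by
  rintro ⟨y, hy⟩
  obtain ⟨x, rfl⟩ := QuotientGroup.mk_surjective y
  have hx (z : G) : ⁅x, z⁆ ∈ center G := by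
    rw [← QuotientGroup.eq_one_iff, ← QuotientGroup.mk'_apply, map_commutatorElement,
      commutatorElement_eq_one_iff_mul_comm]
    exact (mem_center_iff.mp hy _).symm
  obtain ⟨n, hn, hxn⟩ := exists_pow_mem_center_of_commutatorElement_mem_center hZ hx
  refine Submonoid.isOfFinOrder_coe.mp (isOfFinOrder_iff_pow_eq_one.mpr ⟨n, hn, ?_⟩)
  rwa [← QuotientGroup.mk_pow, QuotientGroup.eq_one_iff]

theorem Group.finite_of_isNilpotent_of_isMulTorsion_center [Group.IsNilpotent G]
    [Group.FG G] (hZ : IsMulTorsion (center G)) : Finite G := by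
  revert hZ
  refine nilpotent_center_quotient_ind
    (P := fun G _ _ => ∀ [Group.FG G], IsMulTorsion (center G) → Finite G) G ?_ ?_
  · intro G _ _ _ _
    exact Finite.of_subsingleton
  · intro G _ _ ih _ hZ
    have : Finite (G ⧸ center G) := ih (isMulTorsion_center_quotient_center hZ)
    have : (center G).FiniteIndex := finiteIndex_of_finite_quotient
    have : Finite (center G) :=
      open scoped IsMulCommutative in CommGroup.finite_of_fg_isMulTorsion (center G) hZ
    exact Finite.of_subgroup_quotient (center G)

theorem isMulTorsion_center_of_forall_normal_ne_bot_mem {q : G} (hq : q ≠ 1)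
    (hq_mem : ∀ K : Subgroup G, K.Normal → K ≠ ⊥ → q ∈ K) : IsMulTorsion (center G) := by
  intro z
  by_contra hz
  rw [← Submonoid.isOfFinOrder_coe] at hz
  have hmem (n : ℕ) (hn : 0 < n) : ∃ m : ℤ, (z : G) ^ (n * m) = q := by
    have hK : (zpowers ((z : G) ^ n)).Normal :=
      normal_of_le_center (zpowers_le.mpr (pow_mem z.2 n))
    have hK1 : zpowers ((z : G) ^ n) ≠ ⊥ := fun h =>
      hz (isOfFinOrder_iff_pow_eq_one.mpr ⟨n, hn, zpowers_eq_bot.mp h⟩)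
    obtain ⟨m, hm⟩ := mem_zpowers_iff.mp (hq_mem _ hK hK1)
    exact ⟨m, by rwa [zpow_mul, zpow_natCast]⟩
  obtain ⟨k, hk⟩ := hmem 1 one_pos
  obtain ⟨m, hm⟩ := hmem (k.natAbs + 1) k.natAbs.succ_pos
  have hdvd : ((k.natAbs + 1 : ℕ) : ℤ) ∣ k :=
    ⟨m, by simpa using injective_zpow_iff_not_isOfFinOrder.mpr hz (hk.trans hm.symm)⟩
  have hk0 : k = 0 := Int.eq_zero_of_dvd_of_natAbs_lt_natAbs hdvd (by omega)
  exact hq (by simpa [hk0] using hk.symm)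

theorem Subgroup.exists_normal_notMem_maximal {g : G} (hg : g ≠ 1) :
    ∃ M : Subgroup G, M.Normal ∧ g ∉ M ∧
      ∀ K : Subgroup G, K.Normal → M ≤ K → g ∉ K → K ≤ M := by
  have hchain : ∀ c ⊆ {N : Subgroup G | N.Normal ∧ g ∉ N}, IsChain (· ≤ ·) c →
      ∀ N ∈ c, ∃ ub ∈ {N : Subgroup G | N.Normal ∧ g ∉ N}, ∀ K ∈ c, K ≤ ub := by
    intro c hc hchain N hN
    refine ⟨sSup c, ⟨sSup_normal c fun K hK => (hc hK).1, fun hgc => ?_⟩, fun _ => le_sSup⟩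
    obtain ⟨K, hK, hgK⟩ := (mem_sSup_of_directedOn ⟨N, hN⟩ hchain.directedOn).mp hgc
    exact (hc hK).2 hgK
  obtain ⟨M, -, ⟨hMn, hgM⟩, hmax⟩ := zorn_le_nonempty₀ _ hchain ⊥ ⟨inferInstance, hg⟩
  exact ⟨M, hMn, hgM, fun K hK hMK hgK => hmax ⟨hK, hgK⟩ hMK⟩

theorem QuotientGroup.mk_mem_of_normal_ne_bot {M : Subgroup G} [M.Normal] {g : G}
    (hmax : ∀ K : Subgroup G, K.Normal → M ≤ K → g ∉ K → K ≤ M)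
    (K : Subgroup (G ⧸ M)) (hK : K.Normal) (hK1 : K ≠ ⊥) : (g : G ⧸ M) ∈ K := by
  by_contra hgK
  have hle : K.comap (mk' M) ≤ M :=
    hmax _ (hK.comap _) ((ker_mk' M).ge.trans (MonoidHom.ker_le_comap _ K)) hgK
  refine hK1 ?_
  rwa [← map_comap_eq_self_of_surjective (mk'_surjective M) K, Subgroup.map_eq_bot_iff,
    ker_mk']

instance Group.residuallyFinite_of_isNilpotent [Group.IsNilpotent G] [Group.FG G] :
    Group.ResiduallyFinite G := by
  refine residuallyFinite_iff_exists_finiteIndex.mpr fun g hg => ?_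
  obtain ⟨M, hM, hgM, hmax⟩ := exists_normal_notMem_maximal hg
  have hg' : (g : G ⧸ M) ≠ 1 := by rwa [ne_eq, QuotientGroup.eq_one_iff]
  have : Finite (G ⧸ M) := finite_of_isNilpotent_of_isMulTorsion_center <|
    isMulTorsion_center_of_forall_normal_ne_bot_mem hg' (QuotientGroup.mk_mem_of_normal_ne_bot hmax)
  exact ⟨M, finiteIndex_of_finite_quotient, hgM⟩

end

/-- Every finitely generated residually nilpotent group is residually finite. -/
theorem residually_finite_of_fg_residually_nilpotent
    (G : Type) [Group G] (hfg : Group.FG G)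
    (hres : ∀ g : G, g ≠ 1 → ∃ (N : Subgroup G) (hN : N.Normal),
      g ∉ N ∧ (letI := hN; Group.IsNilpotent (G ⧸ N))) :
    ∀ g : G, g ≠ 1 → ∃ (M : Subgroup G), M.Normal ∧ g ∉ M ∧ Finite (G ⧸ M) := by
  intro g hg
  obtain ⟨N, hN, hgN, hnil⟩ := hres g hg
  have hg' : (g : G ⧸ N) ≠ 1 := by rwa [ne_eq, QuotientGroup.eq_one_iff]
  obtain ⟨H, hgH⟩ := Group.exists_finiteIndexNormalSubgroup_notMem _ hg'
  exact ⟨(H.comap (QuotientGroup.mk' N)).toSubgroup, inferInstance, hgH, inferInstance⟩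
end

section
/- Let Q be a group acting on A = ℤ^n by group automorphisms, and let G = A ⋊ Q be the corresponding semidirect product. Suppose the induced linear action of Q on ℚⁿ = A ⊗ ℚ is irreducible (the only Q-invariant ℚ-subspaces of ℚⁿ are 0 and ℚⁿ) and nontrivial (some element of Q acts on ℚⁿ by a non-identity map). Then the image of A under the abelianization map G → G/[G,G] is a finite subgroup; in particular the image of A in H₁(G, ℚ) = (G/[G,G]) ⊗ ℚ is trivial. -/
open TensorProduct

/-- The `ℚ`-linear extension to `ℚⁿ` of an additive automorphism of `ℤⁿ`
(which is automatically `ℤ`-linear). -/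
noncomputable def ratExtension (n : ℕ) (f : (Fin n → ℤ) ≃+ (Fin n → ℤ)) :
    (Fin n → ℚ) →ₗ[ℚ] (Fin n → ℚ) :=
  Matrix.toLin' (Matrix.of fun i j => ((f (Pi.single j 1)) i : ℚ))

/-- The image of `a ∈ A` in `H₁(G, ℚ) = (G/[G,G]) ⊗ ℚ`, where `G = A ⋊[φ] Q`. -/
noncomputable def imageInH1 (n : ℕ) (Q : Type) [Group Q]
    (φ : Q →* MulAut (Multiplicative (Fin n → ℤ)))
    (a : Multiplicative (Fin n → ℤ)) :
    TensorProduct ℤ (Additive (Abelianization (Multiplicative (Fin n → ℤ) ⋊[φ] Q))) ℚ :=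
  TensorProduct.tmul ℤ
    (Additive.ofMul (Abelianization.of (SemidirectProduct.inl (φ := φ) a))) (1 : ℚ)

/- auxiliary: clearing denominators -/
lemma aux_exists_nat_smul_mem_intSpan {M : Type*} [AddCommGroup M] [Module ℚ M]
    (s : Set M) {x : M} (hx : x ∈ Submodule.span ℚ s) :
    ∃ m : ℕ, 0 < m ∧ (m : ℤ) • x ∈ Submodule.span ℤ s := by
  induction hx using Submodule.span_induction with
  | mem x h => exact ⟨1, one_pos, by simpa using Submodule.subset_span h⟩
  | zero => exact ⟨1, one_pos, by simp⟩
  | add x y hx hy ihx ihy =>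
      obtain ⟨m, hm, hmx⟩ := ihx
      obtain ⟨k, hk, hky⟩ := ihy
      refine ⟨m * k, Nat.mul_pos hm hk, ?_⟩
      have h : ((m * k : ℕ) : ℤ) • (x + y)
          = (k : ℤ) • ((m : ℤ) • x) + (m : ℤ) • ((k : ℤ) • y) := by
        rw [smul_add, smul_smul, smul_smul]
        push_cast
        ring_nf
      rw [h]
      exact add_mem (Submodule.smul_mem _ _ hmx) (Submodule.smul_mem _ _ hky)
  | smul q x hx ih =>
      obtain ⟨m, hm, hmx⟩ := ih
      refine ⟨m * q.den, Nat.mul_pos hm q.pos, ?_⟩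
      have h : ((m * q.den : ℕ) : ℤ) • (q • x) = q.num • ((m : ℤ) • x) := by
        rw [← Int.cast_smul_eq_zsmul ℚ ((m * q.den : ℕ) : ℤ), smul_smul,
          ← mul_smul, ← Int.cast_smul_eq_zsmul ℚ (q.num * (m : ℤ))]
        congr 1
        push_cast
        have hd : (q.den : ℚ) * q = q.num := by
          rw [mul_comm]
          exact_mod_cast q.mul_den_eq_num
        calc (m : ℚ) * (q.den : ℚ) * q = (m : ℚ) * ((q.den : ℚ) * q) := by ring
          _ = (q.num : ℚ) * (m : ℚ) := by rw [hd]; ring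
      rw [h]
      exact Submodule.smul_mem _ _ hmx

/-- coordinatewise cast `ℤⁿ → ℚⁿ` as a `ℤ`-linear map. -/
def castLin (n : ℕ) : (Fin n → ℤ) →ₗ[ℤ] (Fin n → ℚ) where
  toFun v i := (v i : ℚ)
  map_add' v w := by funext i; push_cast; simp
  map_smul' c v := by funext i; push_cast; simp

@[simp] lemma castLin_apply (n : ℕ) (v : Fin n → ℤ) (i : Fin n) :
    castLin n v i = (v i : ℚ) := rfl

lemma castLin_injective (n : ℕ) : Function.Injective (castLin n) := by
  intro a b h
  funext i
  have := congrFun h i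
  rw [castLin_apply, castLin_apply] at this
  exact_mod_cast this

lemma pi_int_eq_sum (n : ℕ) (v : Fin n → ℤ) :
    v = ∑ j, v j • Pi.single j (1 : ℤ) := by
  funext i
  rw [Finset.sum_apply]
  simp [Pi.single_apply, eq_comm]

lemma castLin_single (n : ℕ) (j : Fin n) :
    castLin n (Pi.single j (1 : ℤ)) = Pi.single j (1 : ℚ) := by
  funext i
  rw [castLin_apply]
  simp [Pi.single_apply, apply_ite]

lemma ratExtension_cast (n : ℕ) (g : (Fin n → ℤ) ≃+ (Fin n → ℤ)) (v : Fin n → ℤ) :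
    ratExtension n g (castLin n v) = castLin n (g v) := by
  have hv : g v = ∑ j, v j • g (Pi.single j 1) := by
    conv_lhs => rw [pi_int_eq_sum n v]
    rw [map_sum]
    exact Finset.sum_congr rfl fun j _ => map_zsmul g _ _
  funext i
  rw [ratExtension, Matrix.toLin'_apply]
  show (Matrix.of fun i j => ((g (Pi.single j 1)) i : ℚ)).mulVec (castLin n v) i
      = ((g v) i : ℚ)
  rw [hv]
  rw [Matrix.mulVec, dotProduct]
  rw [Finset.sum_apply]
  push_cast
  refine Finset.sum_congr rfl fun j _ => ?_
  rw [Pi.smul_apply, smul_eq_mul]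
  show ((g (Pi.single j 1)) i : ℚ) * ((v j : ℤ) : ℚ) = _
  push_cast
  ring

/-- The map `A → G^{ab}` (multiplicative form). -/
noncomputable def Fhom (n : ℕ) (Q : Type) [Group Q]
    (φ : Q →* MulAut (Multiplicative (Fin n → ℤ))) :
    Multiplicative (Fin n → ℤ) →* Abelianization (Multiplicative (Fin n → ℤ) ⋊[φ] Q) :=
  Abelianization.of.comp SemidirectProduct.inl

/-- The map `ℤⁿ → Additive G^{ab}` (additive form). -/
noncomputable def fAdd (n : ℕ) (Q : Type) [Group Q]
    (φ : Q →* MulAut (Multiplicative (Fin n → ℤ))) :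
    (Fin n → ℤ) →+ Additive (Abelianization (Multiplicative (Fin n → ℤ) ⋊[φ] Q)) :=
  AddMonoidHom.mk' (fun v => Additive.ofMul (Fhom n Q φ (Multiplicative.ofAdd v)))
    (fun a b => by
      have : Multiplicative.ofAdd (a + b)
          = Multiplicative.ofAdd a * Multiplicative.ofAdd b := rfl
      rw [this, map_mul]
      rfl)

lemma Fhom_phi (n : ℕ) (Q : Type) [Group Q]
    (φ : Q →* MulAut (Multiplicative (Fin n → ℤ)))
    (q : Q) (a : Multiplicative (Fin n → ℤ)) :
    Fhom n Q φ ((φ q) a) = Fhom n Q φ a := by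
  show Abelianization.of (SemidirectProduct.inl ((φ q) a))
      = Abelianization.of (SemidirectProduct.inl a)
  rw [SemidirectProduct.inl_aut, map_mul, map_mul]
  have : Abelianization.of (SemidirectProduct.inr (φ := φ) q⁻¹)
      = (Abelianization.of (SemidirectProduct.inr (φ := φ) q))⁻¹ := by
    rw [← map_inv, ← map_inv]
  rw [this]
  exact mul_inv_cancel_comm _ _

/-- The additive automorphism of `ℤⁿ` induced by `φ q`. -/
def psiE (n : ℕ) (Q : Type) [Group Q]
    (φ : Q →* MulAut (Multiplicative (Fin n → ℤ))) (q : Q) :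
    (Fin n → ℤ) ≃+ (Fin n → ℤ) :=
  MulEquiv.toAdditive (φ q)

lemma psi_comp (n : ℕ) (Q : Type) [Group Q]
    (φ : Q →* MulAut (Multiplicative (Fin n → ℤ)))
    (q q' : Q) (w : Fin n → ℤ) :
    psiE n Q φ q (psiE n Q φ q' w) = psiE n Q φ (q * q') w := by
  show ((φ q) ((φ q') (Multiplicative.ofAdd w)) : Multiplicative (Fin n → ℤ))
      = (φ (q * q')) (Multiplicative.ofAdd w)
  rw [map_mul]
  rfl

/-- Let `Q` act on `A = ℤⁿ` by group automorphisms and let `G = A ⋊ Q`.  If the induced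
linear action of `Q` on `ℚⁿ` is irreducible and nontrivial, then the image of `A` in the
abelianization `G/[G,G]` is finite; in particular the image of `A` in
`H₁(G, ℚ) = (G/[G,G]) ⊗ ℚ` is trivial. -/
theorem image_of_lattice_in_abelianization_finite
    (n : ℕ) (Q : Type) [Group Q]
    (φ : Q →* MulAut (Multiplicative (Fin n → ℤ)))
    (hirr : ∀ W : Submodule ℚ (Fin n → ℚ),
      (∀ q : Q, ∀ x ∈ W, ratExtension n (MulEquiv.toAdditive (φ q)) x ∈ W) →
        W = ⊥ ∨ W = ⊤)
    (hnontriv : ∃ q : Q, ratExtension n (MulEquiv.toAdditive (φ q)) ≠ LinearMap.id) :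
    (((Abelianization.of.comp (SemidirectProduct.inl :
        Multiplicative (Fin n → ℤ) →* Multiplicative (Fin n → ℤ) ⋊[φ] Q)).range :
        Set (Abelianization (Multiplicative (Fin n → ℤ) ⋊[φ] Q))).Finite) ∧
      ∀ a : Multiplicative (Fin n → ℤ), imageInH1 n Q φ a = 0 := by
  classical
  set S : Set (Fin n → ℤ) :=
    {v | ∃ (q : Q) (w : Fin n → ℤ), psiE n Q φ q w - w = v} with hSdef
  -- the homomorphism kills the span of S
  have hker : ∀ v ∈ Submodule.span ℤ S, fAdd n Q φ v = 0 := by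
    intro v hv
    induction hv using Submodule.span_induction with
    | mem x h =>
        obtain ⟨q, w, rfl⟩ := h
        rw [map_sub]
        have heq : fAdd n Q φ (psiE n Q φ q w) = fAdd n Q φ w :=
          congrArg Additive.ofMul (Fhom_phi n Q φ q (Multiplicative.ofAdd w))
        rw [heq, sub_self]
    | zero => exact map_zero _
    | add x y _ _ ihx ihy => rw [map_add, ihx, ihy, add_zero]
    | smul a x _ ih => rw [map_zsmul, ih, smul_zero]
  -- invariance of the rational span
  have hinv : ∀ q : Q, ∀ x ∈ Submodule.span ℚ (castLin n '' S),
      ratExtension n (psiE n Q φ q) x ∈ Submodule.span ℚ (castLin n '' S) := by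
    intro q x hx
    induction hx using Submodule.span_induction with
    | mem x h =>
        obtain ⟨u, hu, rfl⟩ := h
        obtain ⟨q', w, rfl⟩ := hu
        rw [ratExtension_cast]
        have key : psiE n Q φ q (psiE n Q φ q' w - w)
            = (psiE n Q φ (q * q') w - w) - (psiE n Q φ q w - w) := by
          rw [map_sub, psi_comp]
          abel
        rw [key, map_sub]
        exact sub_mem (Submodule.subset_span ⟨_, ⟨q * q', w, rfl⟩, rfl⟩)
          (Submodule.subset_span ⟨_, ⟨q, w, rfl⟩, rfl⟩)
    | zero => rw [map_zero]; exact Submodule.zero_mem _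
    | add x y _ _ ihx ihy => rw [map_add]; exact Submodule.add_mem _ ihx ihy
    | smul a x _ ih => rw [map_smul]; exact Submodule.smul_mem _ _ ih
  -- the rational span is everything
  have hWtop : Submodule.span ℚ (castLin n '' S) = ⊤ := by
    rcases hirr _ hinv with h | h
    · exfalso
      obtain ⟨q, hq⟩ := hnontriv
      apply hq
      have hfix : ∀ (q' : Q) (w : Fin n → ℤ), psiE n Q φ q' w = w := by
        intro q' w
        have hmem : castLin n (psiE n Q φ q' w - w)
            ∈ Submodule.span ℚ (castLin n '' S) :=
          Submodule.subset_span ⟨_, ⟨q', w, rfl⟩, rfl⟩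
        rw [h, Submodule.mem_bot] at hmem
        have h0 : psiE n Q φ q' w - w = 0 :=
          castLin_injective n (by rw [map_zero]; exact hmem)
        exact sub_eq_zero.mp h0
      have hmat : (Matrix.of fun i j =>
          ((psiE n Q φ q (Pi.single j 1)) i : ℚ)) = 1 := by
        ext i j
        rw [Matrix.of_apply, hfix, Matrix.one_apply, Pi.single_apply]
        split_ifs <;> simp_all
      show Matrix.toLin' (Matrix.of fun i j =>
          ((psiE n Q φ q (Pi.single j 1)) i : ℚ)) = LinearMap.id
      rw [hmat, Matrix.toLin'_one]
    · exact h
  -- clearing denominators: a uniform positive integer N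
  have hDint : ∀ j : Fin n, ∃ c : ℕ, 0 < c ∧
      (c : ℤ) • Pi.single j (1 : ℤ) ∈ Submodule.span ℤ S := by
    intro j
    have hmem : Pi.single j (1 : ℚ) ∈ Submodule.span ℚ (castLin n '' S) := by
      rw [hWtop]; trivial
    obtain ⟨c, hc, hcm⟩ := aux_exists_nat_smul_mem_intSpan _ hmem
    refine ⟨c, hc, ?_⟩
    rw [← Submodule.map_span (castLin n) S] at hcm
    obtain ⟨d, hd, hde⟩ := hcm
    have hdd : d = (c : ℤ) • Pi.single j (1 : ℤ) := by
      apply castLin_injective n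
      rw [hde, map_smul, castLin_single]
    rwa [← hdd]
  choose c hc hcD using hDint
  set N : ℕ := ∏ j, c j with hNdef
  have hNpos : 0 < N := Finset.prod_pos fun j _ => hc j
  have hNsingle : ∀ j, (N : ℤ) • Pi.single j (1 : ℤ) ∈ Submodule.span ℤ S := by
    intro j
    have hsplit : (N : ℤ) = (∏ i ∈ Finset.univ.erase j, (c i : ℤ)) * (c j : ℤ) := by
      rw [hNdef]
      push_cast
      rw [mul_comm]
      exact (Finset.mul_prod_erase _ _ (Finset.mem_univ j)).symm
    rw [hsplit, mul_smul]
    exact Submodule.smul_mem _ _ (hcD j)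
  have hNall : ∀ v : Fin n → ℤ, (N : ℤ) • v ∈ Submodule.span ℤ S := by
    intro v
    have hsum : (N : ℤ) • v = ∑ j, v j • ((N : ℤ) • Pi.single j (1 : ℤ)) := by
      conv_lhs => rw [pi_int_eq_sum n v]
      rw [Finset.smul_sum]
      exact Finset.sum_congr rfl fun j _ => smul_comm _ _ _
    rw [hsum]
    exact Submodule.sum_mem _ fun j _ => Submodule.smul_mem _ _ (hNsingle j)
  have htors : ∀ v : Fin n → ℤ, (N : ℤ) • fAdd n Q φ v = 0 := by
    intro v
    rw [← map_zsmul]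
    exact hker _ (hNall v)
  constructor
  · -- finiteness
    have hsub : (((Abelianization.of.comp (SemidirectProduct.inl :
        Multiplicative (Fin n → ℤ) →* Multiplicative (Fin n → ℤ) ⋊[φ] Q)).range :
        Set (Abelianization (Multiplicative (Fin n → ℤ) ⋊[φ] Q))))
        ⊆ (fun v : Fin n → ℤ => Fhom n Q φ (Multiplicative.ofAdd v)) ''
          (Set.univ.pi fun _ : Fin n => Set.Ico (0 : ℤ) (N : ℤ)) := by
      rw [MonoidHom.coe_range]
      rintro x ⟨a, rfl⟩
      have hNne : (N : ℤ) ≠ 0 := by exact_mod_cast hNpos.ne'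
      have hNposZ : (0 : ℤ) < (N : ℤ) := by exact_mod_cast hNpos
      refine ⟨fun j => (Multiplicative.toAdd a) j % (N : ℤ), fun j _ =>
        ⟨Int.emod_nonneg _ hNne, Int.emod_lt_of_pos _ hNposZ⟩, ?_⟩
      have hsplit : Multiplicative.toAdd a
          = (N : ℤ) • (fun j => (Multiplicative.toAdd a) j / (N : ℤ))
            + fun j => (Multiplicative.toAdd a) j % (N : ℤ) := by
        funext j
        simp only [Pi.add_apply, Pi.smul_apply, smul_eq_mul]
        exact (Int.mul_ediv_add_emod _ _).symm
      have hfeq : fAdd n Q φ (fun j => (Multiplicative.toAdd a) j % (N : ℤ))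
          = fAdd n Q φ (Multiplicative.toAdd a) := by
        conv_rhs => rw [hsplit]
        rw [map_add]
        have h0 : (N : ℤ) • fAdd n Q φ
            (fun j => (Multiplicative.toAdd a) j / (N : ℤ)) = 0 := htors _
        rw [map_zsmul, h0, zero_add]
      exact congrArg Additive.toMul hfeq
    exact ((Set.Finite.pi fun _ => Set.finite_Ico _ _).image _).subset hsub
  · -- triviality in H₁(G, ℚ)
    intro a
    have ht : (N : ℤ) • (Additive.ofMul (Abelianization.of
        (SemidirectProduct.inl (φ := φ) a))) = 0 := htors (Multiplicative.toAdd a)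
    rw [imageInH1]
    have h1 : (1 : ℚ) = (N : ℤ) • ((N : ℚ)⁻¹) := by
      rw [zsmul_eq_mul]
      push_cast
      rw [mul_inv_cancel₀ (by exact_mod_cast hNpos.ne' : (N : ℚ) ≠ 0)]
    rw [h1, ← TensorProduct.smul_tmul, ht, TensorProduct.zero_tmul]
end
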